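/- Let (G, M, I) be a finite formal context and let B be a closed itemset whose passkeys have cardinality k + 1 (i.e., B ∈ C_{k+1}). Then there exist a closed itemset D whose passkeys have cardinality k (i.e., D ∈ C_k) and an attribute m ∈ M \ D such that (D ∪ {m})'' = B. -/
import Mathlib


/-- The extent `B'` of an itemset: objects having all attributes of `B`. -/
abbrev extentOf {G M : Type*} [Fintype G] (I : G → M → Prop) [∀ g m, Decidable (I g m)]
    (B : Finset M) : Finset G :=
  Finset.univ.filter fun g => ∀ m ∈ B, I g m

/-- The intent `A'` of a set of objects: attributes shared by all objects of `A`. -/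
abbrev intentOf {G M : Type*} [Fintype M] (I : G → M → Prop) [∀ g m, Decidable (I g m)]
    (A : Finset G) : Finset M :=
  Finset.univ.filter fun m => ∀ g ∈ A, I g m

/-- The closure `B''` of an itemset. -/
abbrev closureOf {G M : Type*} [Fintype G] [Fintype M] (I : G → M → Prop) [∀ g m, Decidable (I g m)]
    (B : Finset M) : Finset M :=
  intentOf I (extentOf I B)

/-- An itemset is closed when `B'' = B`. -/
abbrev isClosedItemset {G M : Type*} [Fintype G] [Fintype M] (I : G → M → Prop) [∀ g m, Decidable (I g m)]
    (B : Finset M) : Prop :=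
  closureOf I B = B

/-- A key: every proper subset has a different extent. -/
abbrev isKey {G M : Type*} [Fintype G] (I : G → M → Prop) [∀ g m, Decidable (I g m)]
    (X : Finset M) : Prop :=
  ∀ Y : Finset M, Y ⊂ X → extentOf I Y ≠ extentOf I X

/-- A passkey: a key of minimum cardinality among the keys of the same closed itemset. -/
abbrev isPasskey {G M : Type*} [Fintype G] [Fintype M] (I : G → M → Prop) [∀ g m, Decidable (I g m)]
    (X : Finset M) : Prop :=
  isKey I X ∧ ∀ Z : Finset M, isKey I Z → closureOf I Z = closureOf I X → X.card ≤ Z.card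

/-- The closure level `C_k`: closed itemsets having a passkey of cardinality `k`. -/
abbrev closureLevel {G M : Type*} [Fintype G] [Fintype M] (I : G → M → Prop) [∀ g m, Decidable (I g m)]
    (k : ℕ) : Set (Finset M) :=
  {B | isClosedItemset I B ∧ ∃ X : Finset M, isPasskey I X ∧ closureOf I X = B ∧ X.card = k}

section Aux

variable {G M : Type*} [Fintype G] [Fintype M] [DecidableEq M] [DecidableEq G]
    (I : G → M → Prop) [∀ g m, Decidable (I g m)]

lemma my_extent_union (A B : Finset M) :
    extentOf I (A ∪ B) = extentOf I A ∩ extentOf I B := by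
  ext g
  simp only [extentOf, Finset.mem_inter, Finset.mem_filter, Finset.mem_univ, true_and,
    Finset.mem_union, or_imp, forall_and]

lemma my_subset_closure (B : Finset M) : B ⊆ closureOf I B := by
  intro m hm
  simp only [closureOf, intentOf, extentOf, Finset.mem_filter, Finset.mem_univ, true_and]
  intro g hg
  exact hg m hm

lemma my_extent_anti {A B : Finset M} (h : A ⊆ B) : extentOf I B ⊆ extentOf I A := by
  intro g hg
  simp only [extentOf, Finset.mem_filter, Finset.mem_univ, true_and] at hg ⊢
  exact fun m hm => hg m (h hm)

lemma my_extent_closure (B : Finset M) : extentOf I (closureOf I B) = extentOf I B := by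
  apply Finset.Subset.antisymm (my_extent_anti I (my_subset_closure I B))
  intro g hg
  simp only [extentOf, closureOf, intentOf, Finset.mem_filter, Finset.mem_univ, true_and] at hg ⊢
  intro m hm
  exact hm g (by simpa [extentOf] using hg)

lemma my_exists_key_subset (S : Finset M) :
    ∃ W ⊆ S, isKey I W ∧ extentOf I W = extentOf I S := by
  induction S using Finset.strongInduction with
  | _ S ih =>
    by_cases hS : isKey I S
    · exact ⟨S, Finset.Subset.refl S, hS, rfl⟩
    · simp only [isKey, not_forall, not_ne_iff] at hS
      obtain ⟨Y, hY, hYe⟩ := hS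
      obtain ⟨W, hWY, hWkey, hWe⟩ := ih Y hY
      exact ⟨W, hWY.trans hY.subset, hWkey, hWe.trans hYe⟩

lemma my_key_subset {X : Finset M} (hX : isKey I X) {Y : Finset M} (hY : Y ⊆ X) :
    isKey I Y := by
  intro Z hZ hZe
  apply hX (Z ∪ (X \ Y))
  · constructor
    · exact Finset.union_subset (hZ.subset.trans hY) (Finset.sdiff_subset)
    · intro hsub
      obtain ⟨a, haY, haZ⟩ := Finset.exists_of_ssubset hZ
      have := hsub (hY haY)
      simp only [Finset.mem_union, Finset.mem_sdiff] at this
      rcases this with h | ⟨_, h⟩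
      · exact haZ h
      · exact h haY
  · rw [my_extent_union, hZe, ← my_extent_union, Finset.union_sdiff_of_subset hY]

end Aux

/-- Every closed itemset of closure level `k + 1` is the closure of
`D ∪ {m}` for some closed itemset `D` of level `k` and some attribute `m ∉ D`. -/
theorem level_succ_from_level {G M : Type*} [Fintype G] [Fintype M] [DecidableEq M]
    (I : G → M → Prop) [∀ g m, Decidable (I g m)]
    (k : ℕ) (B : Finset M) (hB : B ∈ closureLevel I (k + 1)) :
    ∃ D ∈ closureLevel I k, ∃ m : M, m ∉ D ∧ closureOf I (D ∪ {m}) = B := by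
  classical
  obtain ⟨hBclosed, X, ⟨hXkey, hXmin⟩, hXcl, hXcard⟩ := hB
  have hX0 : X.Nonempty := Finset.card_pos.mp (by omega)
  obtain ⟨m, hm⟩ := hX0
  set Y := X.erase m with hYdef
  have hYX : Y ⊆ X := Finset.erase_subset m X
  have hYss : Y ⊂ X := Finset.erase_ssubset hm
  have hYkey : isKey I Y := my_key_subset I hXkey hYX
  have hYcard : Y.card = k := by
    rw [hYdef, Finset.card_erase_of_mem hm, hXcard]
    omega
  have hins : insert m Y = X := Finset.insert_erase hm
  have hunion : Y ∪ {m} = X := by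
    rw [Finset.union_comm, ← Finset.insert_eq, hins]
  set D := closureOf I Y with hDdef
  -- extents
  have hextYm : extentOf I Y ∩ extentOf I {m} = extentOf I X := by
    rw [← my_extent_union, hunion]
  have hmD : m ∉ D := by
    intro hmem
    apply hXkey Y hYss
    have hsub : extentOf I Y ⊆ extentOf I {m} := by
      intro g hg
      rw [hDdef] at hmem
      simp only [closureOf, intentOf, Finset.mem_filter, Finset.mem_univ, true_and] at hmem
      simp only [extentOf, Finset.mem_filter, Finset.mem_univ, true_and, Finset.mem_singleton]
      have hg' : ∀ a ∈ Y, I g a := by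
        simpa [extentOf] using hg
      exact fun a ha => ha ▸ hmem g (by simpa [extentOf] using hg')
    rw [← hextYm, Finset.inter_eq_left.mpr hsub]
  have hextD : extentOf I D = extentOf I Y := my_extent_closure I Y
  have hclDm : closureOf I (D ∪ {m}) = B := by
    have : extentOf I (D ∪ {m}) = extentOf I X := by
      rw [my_extent_union, hextD, hextYm]
    rw [← hXcl]
    simp only [closureOf, this]
  have hDclosed : isClosedItemset I D := by
    simp only [isClosedItemset, hDdef, closureOf, my_extent_closure]
  have hYpass : isPasskey I Y := by
    refine ⟨hYkey, fun Z hZkey hZcl => ?_⟩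
    by_contra hlt
    push_neg at hlt
    have hZe : extentOf I Z = extentOf I Y := by
      have := congrArg (extentOf I) hZcl
      rwa [my_extent_closure, my_extent_closure] at this
    have hextZm : extentOf I (Z ∪ {m}) = extentOf I X := by
      rw [my_extent_union, hZe, hextYm]
    obtain ⟨W, hWsub, hWkey, hWe⟩ := my_exists_key_subset I (Z ∪ {m})
    have hWcl : closureOf I W = closureOf I X := by
      simp only [closureOf, hWe, hextZm]
    have := hXmin W hWkey hWcl
    have hWcard : W.card ≤ Z.card + 1 := by
      calc W.card ≤ (Z ∪ {m}).card := Finset.card_le_card hWsub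
        _ ≤ Z.card + 1 := by
            simpa using Finset.card_union_le Z {m}
    omega
  exact ⟨D, ⟨hDclosed, Y, hYpass, rfl, hYcard⟩, m, hmD, hclDm⟩
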